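/- Let p be a prime, n a positive natural number, and m = p^n. Let V = Fin m → ZMod p, let A ∈ GL_m(ZMod p) be the Jordan block with eigenvalue 1 (entries 1 on the diagonal and first superdiagonal, 0 elsewhere), and let G be the semidirect product of the additive group V by the cyclic subgroup generated by A inside GL_m(ZMod p), where A acts on V by matrix-vector multiplication. Then the element g = (e₀, A) of G, where e₀ ∈ V is the first standard basis vector, has order exactly p^(n+1); in particular g^(p^n) = (e_{m-1}, 1) ≠ 1, where e_{m-1} is the last standard basis vector. -/

import Mathlib

/-- The nilpotent upper-triangular Jordan block: entry `(i,j)` is `1` if `j = i + 1`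
and `0` otherwise. -/
def jordanNilp (p m : ℕ) : Matrix (Fin m) (Fin m) (ZMod p) :=
  Matrix.of fun i j => if (j : ℕ) = (i : ℕ) + 1 then 1 else 0

/-- The additive automorphism of `V = Fin m → ZMod p` given by right matrix-vector
multiplication (`vecMul`) by an invertible matrix `g`, i.e. `v ↦ v · g`. -/
def vecMulAut {p m : ℕ} (g : GL (Fin m) (ZMod p)) : AddAut (Fin m → ZMod p) where
  toFun v := Matrix.vecMul v (g : Matrix (Fin m) (Fin m) (ZMod p))
  invFun v := Matrix.vecMul v ((↑(g⁻¹) : Matrix (Fin m) (Fin m) (ZMod p)))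
  left_inv v := by simp [Matrix.vecMul_vecMul]
  right_inv v := by simp [Matrix.vecMul_vecMul]
  map_add' u v := Matrix.add_vecMul (g : Matrix (Fin m) (Fin m) (ZMod p)) u v

set_option maxHeartbeats 1000000 in
/-- The action of the cyclic subgroup `⟨A⟩ = Subgroup.zpowers A` on the (multiplicative
version of the) additive group `V = Fin m → ZMod p`, a matrix acting by right
matrix-vector multiplication `v ↦ v · A`. -/
def holPhi {p m : ℕ} (A : GL (Fin m) (ZMod p)) :
    ↥(Subgroup.zpowers A) →* MulAut (Multiplicative (Fin m → ZMod p)) where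
  toFun g := AddEquiv.toMultiplicative (vecMulAut (g : GL (Fin m) (ZMod p)))
  map_one' := by
    ext v
    simp [vecMulAut, AddEquiv.toMultiplicative]
  map_mul' g h := by
    rw [show g * h = h * g from Subtype.ext (by
      obtain ⟨a, ha⟩ := Subgroup.mem_zpowers_iff.mp g.2
      obtain ⟨b, hb⟩ := Subgroup.mem_zpowers_iff.mp h.2
      simp only [Subgroup.coe_mul]
      rw [← ha, ← hb]
      exact zpow_mul_comm A a b)]
    ext v
    simp [vecMulAut, AddEquiv.toMultiplicative, Matrix.vecMul_vecMul]

/-! Write `A = 1 + N`. Pascal's rule is exactly the recursion `c_{k+1} = e₀ + c_k · A` satisfied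
by the translation part of `g ^ k`, so `g ^ k = (c_k, A ^ k)` with `c_k j = (k choose (j + 1))`.
For `k = p ^ n = m` all these binomial coefficients except the last are divisible by `p`, so
`c_{p^n} = e_{m-1}`; and `A ^ p ^ n = 1 + N ^ p ^ n = 1` by the Frobenius, since `N ^ m = 0`.
Hence `g ^ p ^ n` is a nonzero translation, which has order `p`. -/

open Matrix

section JordanBlock

variable {p m : ℕ}

lemma jordanNilp_pow (k : ℕ) :
    jordanNilp p m ^ k = Matrix.of fun i j : Fin m => if (j : ℕ) = i + k then 1 else 0 := by
  induction k with
  | zero =>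
    ext i j
    simp [Matrix.one_apply, Fin.ext_iff, eq_comm]
  | succ k ih =>
    ext i j
    rw [pow_succ, ih, Matrix.mul_apply]
    simp only [jordanNilp, Matrix.of_apply, mul_ite, mul_one, mul_zero, ← ite_and]
    by_cases hj : (j : ℕ) = i + (k + 1)
    · rw [Fintype.sum_eq_single ⟨i + k, by omega⟩
        fun l hl => if_neg fun h => hl (Fin.ext h.2)]
      simp only [if_pos hj]
      exact if_pos ⟨by omega, trivial⟩
    · exact (Finset.sum_eq_zero fun l _ => if_neg (by omega)).trans (if_neg hj).symm

lemma jordanNilp_pow_eq_zero {k : ℕ} (hk : m ≤ k) : jordanNilp p m ^ k = 0 := by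
  ext i j
  simp only [jordanNilp_pow, Matrix.of_apply, Matrix.zero_apply]
  exact if_neg (by omega)

lemma one_add_jordanNilp_pow_eq_one [Fact p.Prime] {n : ℕ} (hm : m ≤ p ^ n) :
    (1 + jordanNilp p m) ^ p ^ n = 1 := by
  cases isEmpty_or_nonempty (Fin m)
  · exact Subsingleton.elim _ _
  rw [add_pow_char_pow_of_commute p n (Commute.one_left _), one_pow, jordanNilp_pow_eq_zero hm,
    add_zero]

lemma vecMul_jordanNilp_zero (v : Fin m → ZMod p) (h : 0 < m) :
    (v ᵥ* jordanNilp p m) ⟨0, h⟩ = 0 := by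
  simp [vecMul, dotProduct, jordanNilp]

lemma vecMul_jordanNilp_succ (v : Fin m → ZMod p) {j : ℕ} (h : j + 1 < m) :
    (v ᵥ* jordanNilp p m) ⟨j + 1, h⟩ = v ⟨j, by omega⟩ := by
  simp only [vecMul, dotProduct, jordanNilp, Matrix.of_apply, mul_ite, mul_one, mul_zero]
  rw [Fintype.sum_eq_single ⟨j, by omega⟩
    fun l hl => if_neg fun h => hl (Fin.ext (by simp only at h ⊢; omega))]
  simp

end JordanBlock

def chooseSuccVec (p m k : ℕ) : Fin m → ZMod p := fun j => (k.choose (j + 1) : ZMod p)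

section Binomial

variable {p m : ℕ}

lemma chooseSuccVec_zero : chooseSuccVec p m 0 = 0 := by
  ext j
  simp [chooseSuccVec]

lemma chooseSuccVec_succ (k : ℕ) (h : 0 < m) :
    chooseSuccVec p m (k + 1) =
      Pi.single ⟨0, h⟩ 1 + chooseSuccVec p m k ᵥ* (1 + jordanNilp p m) := by
  ext ⟨j, hj⟩
  rw [Pi.add_apply, vecMul_add, vecMul_one, Pi.add_apply]
  cases j with
  | zero =>
    simp only [chooseSuccVec, vecMul_jordanNilp_zero, Pi.single_eq_same, Nat.choose_succ_succ,
      Nat.choose_zero_right, Nat.cast_add, Nat.cast_one, add_zero, add_comm]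
  | succ j =>
    rw [vecMul_jordanNilp_succ, Pi.single_eq_of_ne (by simp), zero_add]
    simp only [chooseSuccVec]
    rw [Nat.choose_succ_succ', Nat.cast_add, add_comm]

lemma chooseSuccVec_prime_pow [Fact p.Prime] {n : ℕ} (hm : m = p ^ n) (h : m - 1 < m) :
    chooseSuccVec p m (p ^ n) = Pi.single ⟨m - 1, h⟩ 1 := by
  ext ⟨j, hj⟩
  rw [Pi.single_apply]
  by_cases hjm : j = m - 1
  · subst hjm
    simp [chooseSuccVec, Nat.sub_add_cancel (by omega : 1 ≤ m), ← hm]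
  · rw [if_neg (by simpa using hjm)]
    change ((p ^ n).choose (j + 1) : ZMod p) = 0
    rw [ZMod.natCast_eq_zero_iff]
    exact (Fact.out : p.Prime).dvd_choose_pow (by omega) (by omega)

end Binomial

section Holomorph

variable {p m : ℕ}

lemma holPhi_apply (A : GL (Fin m) (ZMod p)) (a : Subgroup.zpowers A)
    (v : Multiplicative (Fin m → ZMod p)) :
    holPhi A a v = Multiplicative.ofAdd (v.toAdd ᵥ* ((a : GL (Fin m) (ZMod p)) : Matrix _ _ _)) :=
  rfl

lemma mk_single_zero_pow {A : GL (Fin m) (ZMod p)}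
    (hA : (A : Matrix (Fin m) (Fin m) (ZMod p)) = 1 + jordanNilp p m) (h : 0 < m) (k : ℕ) :
    (⟨Multiplicative.ofAdd (Pi.single ⟨0, h⟩ 1), ⟨A, Subgroup.mem_zpowers A⟩⟩ :
        Multiplicative (Fin m → ZMod p) ⋊[holPhi A] Subgroup.zpowers A) ^ k =
      ⟨Multiplicative.ofAdd (chooseSuccVec p m k), ⟨A, Subgroup.mem_zpowers A⟩ ^ k⟩ := by
  induction k with
  | zero => simp [chooseSuccVec_zero]
  | succ k ih =>
    rw [pow_succ', ih, SemidirectProduct.mul_def, holPhi_apply, ← pow_succ',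
      chooseSuccVec_succ k h, hA]
    rfl

lemma mk_ofAdd_one_pow_char {ι G : Type*} [Group G]
    {φ : G →* MulAut (Multiplicative (ι → ZMod p))} (v : ι → ZMod p) :
    (⟨Multiplicative.ofAdd v, 1⟩ : Multiplicative (ι → ZMod p) ⋊[φ] G) ^ p = 1 := by
  change SemidirectProduct.inl _ ^ p = 1
  rw [← map_pow, ← ofAdd_nsmul, ZModModule.char_nsmul_eq_zero, ofAdd_zero, map_one]

lemma mk_ofAdd_one_eq_one_iff {ι G : Type*} [Group G]
    {φ : G →* MulAut (Multiplicative (ι → ZMod p))} (v : ι → ZMod p) :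
    (⟨Multiplicative.ofAdd v, 1⟩ : Multiplicative (ι → ZMod p) ⋊[φ] G) = 1 ↔ v = 0 :=
  SemidirectProduct.inl_injective.eq_iff' rfl

end Holomorph

theorem orderOf_holomorph_element_general (p m n : ℕ) [Fact p.Prime]
    (hm : m = p ^ n)
    (A : GL (Fin m) (ZMod p))
    (hA : (A : Matrix (Fin m) (Fin m) (ZMod p)) = 1 + jordanNilp p m)
    (g : Multiplicative (Fin m → ZMod p) ⋊[holPhi A] ↥(Subgroup.zpowers A))
    (hg : g = ⟨Multiplicative.ofAdd
        (Pi.single (⟨0, hm ▸ pow_pos (Fact.out (p := p.Prime)).pos n⟩ : Fin m) 1),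
        ⟨A, Subgroup.mem_zpowers A⟩⟩) :
    orderOf g = p ^ (n + 1) ∧
    g ^ (p ^ n) = ⟨Multiplicative.ofAdd
        (Pi.single (⟨m - 1, Nat.sub_lt (hm ▸ pow_pos (Fact.out (p := p.Prime)).pos n) one_pos⟩ : Fin m) 1),
        1⟩ ∧
    g ^ (p ^ n) ≠ 1 := by
  have hm0 : 0 < m := hm ▸ pow_pos (Fact.out : p.Prime).pos n
  have hA_pow : (⟨A, Subgroup.mem_zpowers A⟩ : Subgroup.zpowers A) ^ p ^ n = 1 :=
    Subtype.ext <| Units.ext <| by simp [hA, one_add_jordanNilp_pow_eq_one hm.le]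
  have hg_pow : g ^ p ^ n = ⟨Multiplicative.ofAdd (Pi.single ⟨m - 1, by omega⟩ 1), 1⟩ := by
    rw [hg, mk_single_zero_pow hA hm0, chooseSuccVec_prime_pow hm, hA_pow]
  have hg_pow_ne : g ^ p ^ n ≠ 1 := by
    rw [hg_pow, Ne, mk_ofAdd_one_eq_one_iff]
    exact Pi.single_ne_zero_iff.mpr one_ne_zero
  refine ⟨orderOf_eq_prime_pow hg_pow_ne ?_, hg_pow, hg_pow_ne⟩
  rw [pow_succ, pow_mul, hg_pow, mk_ofAdd_one_pow_char]

theorem orderOf_holomorph_element (p m n : ℕ) [Fact p.Prime]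
    (hn : 0 < n) (hm : m = p ^ n)
    (A : GL (Fin m) (ZMod p))
    (hA : (A : Matrix (Fin m) (Fin m) (ZMod p)) = 1 + jordanNilp p m)
    (g : Multiplicative (Fin m → ZMod p) ⋊[holPhi A] ↥(Subgroup.zpowers A))
    (hg : g = ⟨Multiplicative.ofAdd
        (Pi.single (⟨0, hm ▸ pow_pos (Fact.out (p := p.Prime)).pos n⟩ : Fin m) 1),
        ⟨A, Subgroup.mem_zpowers A⟩⟩) :
    orderOf g = p ^ (n + 1) ∧
    g ^ (p ^ n) = ⟨Multiplicative.ofAdd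
        (Pi.single (⟨m - 1, Nat.sub_lt (hm ▸ pow_pos (Fact.out (p := p.Prime)).pos n) one_pos⟩ : Fin m) 1),
        1⟩ ∧
    g ^ (p ^ n) ≠ 1 :=
  orderOf_holomorph_element_general p m n hm A hA g hg
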